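/- Let r ≥ 3, d ≥ 3, let H be an r-uniform supertree with a vertex u, and let 2 ≤ i ≤ d. Then φ(P_d^r(e_{⌈d/2⌉},u)H, x) − φ(P_d^r(v_i,u)H, x) = x^{r−3} · Σ_{e ∈ E_u(H)} φ(H − V(e), x) · ( x^{r−1}·φ(P_{i−2}^r, x)·φ(P_{d−i}^r, x) − φ(P_{⌊d/2⌋}^r, x)·φ(P_{⌈d/2⌉−1}^r, x) ), where P_d^r(v_i,u)H is obtained by identifying the joint vertex v_i of the loose path P_d^r with u, and P_d^r(e_{⌈d/2⌉},u)H is obtained by identifying a fixed core (non-joint) vertex of the edge e_{⌈d/2⌉} of P_d^r with u. -/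

import Mathlib

open Classical

noncomputable section

/-- A finite hypergraph: a finite vertex set together with a finite set of edges,
each edge being a finite set of vertices. -/
structure FinHypergraph (α : Type*) where
  verts : Finset α
  edges : Finset (Finset α)

namespace FinHypergraph

variable {α : Type*}

/-- Every edge of `H` is a subset of the vertex set of `H`. -/
def WellFormed (H : FinHypergraph α) : Prop := ∀ e ∈ H.edges, e ⊆ H.verts

/-- `H` is `r`-uniform: every edge has exactly `r` vertices. -/
def Uniform (H : FinHypergraph α) (r : ℕ) : Prop := ∀ e ∈ H.edges, e.card = r

/-- A set of edges is a matching if its members are pairwise disjoint. -/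
def IsMatchingSet (M : Finset (Finset α)) : Prop :=
  ∀ e ∈ M, ∀ f ∈ M, e ≠ f → Disjoint e f

/-- `m(H,k)`: the number of matchings of `H` consisting of exactly `k` edges. -/
noncomputable def matchCount (H : FinHypergraph α) (k : ℕ) : ℕ :=
  (H.edges.powerset.filter (fun M => M.card = k ∧ IsMatchingSet M)).card

/-- The matching polynomial `φ(H,x) = Σ_k (-1)^k m(H,k) x^(n - r·k)` of an
`r`-uniform hypergraph `H` with `n` vertices, evaluated at a real number `x`. -/
noncomputable def matchPoly (H : FinHypergraph α) (r : ℕ) (x : ℝ) : ℝ :=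
  ∑ k ∈ Finset.range (H.verts.card + 1),
    (-1 : ℝ) ^ k * (H.matchCount k : ℝ) * x ^ (H.verts.card - r * k)

/-- `H − S`: delete the vertices of `S` and all edges meeting `S`. -/
def removeVerts (H : FinHypergraph α) (S : Finset α) : FinHypergraph α :=
  ⟨H.verts \ S, H.edges.filter (fun e => Disjoint e S)⟩

/-- `H` is connected: nonempty vertex set, and any two vertices are linked by a chain of
vertices successively lying in a common edge. -/
def Connected (H : FinHypergraph α) : Prop :=
  H.verts.Nonempty ∧ ∀ u ∈ H.verts, ∀ v ∈ H.verts,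
    Relation.ReflTransGen (fun a b => ∃ e ∈ H.edges, a ∈ e ∧ b ∈ e) u v

/-- `H` has a cycle: an alternating sequence `v_0 e_0 v_1 e_1 … v_{ℓ-1} e_{ℓ-1} v_0`
(with `ℓ ≥ 2`) of distinct vertices and distinct edges such that consecutive vertices lie
in the intermediate edge. -/
def HasCycle (H : FinHypergraph α) : Prop :=
  ∃ (ℓ : ℕ) (v : ℕ → α) (e : ℕ → Finset α), 2 ≤ ℓ ∧
    Set.InjOn v (Set.Iio ℓ) ∧ Set.InjOn e (Set.Iio ℓ) ∧
    ∀ i < ℓ, e i ∈ H.edges ∧ v i ∈ e i ∧ v ((i + 1) % ℓ) ∈ e i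

/-- An `r`-uniform supertree: a connected acyclic `r`-uniform hypergraph. -/
def IsSupertree (H : FinHypergraph α) (r : ℕ) : Prop :=
  H.WellFormed ∧ H.Uniform r ∧ H.Connected ∧ ¬ H.HasCycle

/-- The edges of the `r`-uniform loose path of length `p` along the vertex labelling `w`:
the `i`-th edge consists of the `r` vertices `w (i*(r-1)), …, w ((i+1)*(r-1))`, so that
consecutive edges share exactly one vertex. -/
def loosePathEdges (r p : ℕ) (w : ℕ → α) : Finset (Finset α) :=
  (Finset.range p).image (fun i => (Finset.Icc (i * (r - 1)) ((i + 1) * (r - 1))).image w)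

/-- `P` is an `r`-uniform loose path with `m` edges (`P_m^r`); for `m = 0` it is a single
vertex with no edge. -/
def IsLoosePath (r m : ℕ) (P : FinHypergraph α) : Prop :=
  ∃ w : ℕ → α, Set.InjOn w (Set.Iic (m * (r - 1))) ∧
    P.verts = (Finset.Icc 0 (m * (r - 1))).image w ∧
    P.edges = loosePathEdges r m w

/-- `T'` is obtained from the disjoint union of the loose path `P_d^r` and `H` by
identifying the path vertex with label `c` with the vertex `u` of `H` (all other path
vertices being new). -/
def IsPathIdentify (r d c : ℕ) (H : FinHypergraph α) (u : α) (T' : FinHypergraph α) : Prop :=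
  ∃ w : ℕ → α, Set.InjOn w (Set.Iic (d * (r - 1))) ∧ w c = u ∧
    (∀ t, t ≤ d * (r - 1) → t ≠ c → w t ∉ H.verts) ∧
    T'.verts = H.verts ∪ (Finset.Icc 0 (d * (r - 1))).image w ∧
    T'.edges = H.edges ∪ loosePathEdges r d w

end FinHypergraph

open FinHypergraph

/-!
Delete the glued vertex `u`. If `K` meets `H` only in `u ∈ K`, every matching of `H ∪ K` either
avoids `u` or covers it by exactly one edge, of `H` or of `K`, and what is left is a disjoint
union, whose matching polynomial is the product. Recombining the `K`-terms with the same
recursion in `K` gives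
`φ(H ∪ K) = φ(H − u) φ(K) − (Σ_{e ∈ E_u(H)} φ(H − V(e))) φ(K − u)`.
For `K = P_d^r` the first term does not depend on where `u` sits, so the difference is
`Σ_{e ∈ E_u(H)} φ(H − V(e))` times `φ(P_d^r − v_i) − φ(P_d^r − w)` with `w` the core vertex.
Removing a vertex of a loose path leaves the two loose paths on either side and the isolated
remains of the edges through it: `r − 3` vertices for a core vertex, `2r − 4` for a joint one.
-/

namespace FinHypergraph

section Operations

variable {α : Type*}

theorem ext {G K : FinHypergraph α} (hv : G.verts = K.verts) (he : G.edges = K.edges) :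
    G = K := by
  cases G; cases K; congr

instance : Union (FinHypergraph α) :=
  ⟨fun G K => ⟨G.verts ∪ K.verts, G.edges ∪ K.edges⟩⟩

@[simp] theorem union_verts (G K : FinHypergraph α) : (G ∪ K).verts = G.verts ∪ K.verts := rfl

@[simp] theorem union_edges (G K : FinHypergraph α) : (G ∪ K).edges = G.edges ∪ K.edges := rfl

@[simp] theorem removeVerts_verts (G : FinHypergraph α) (S : Finset α) :
    (G.removeVerts S).verts = G.verts \ S := rfl

@[simp] theorem removeVerts_edges (G : FinHypergraph α) (S : Finset α) :
    (G.removeVerts S).edges = G.edges.filter (Disjoint · S) := rfl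

theorem removeVerts_verts_subset (G : FinHypergraph α) (S : Finset α) :
    (G.removeVerts S).verts ⊆ G.verts :=
  Finset.sdiff_subset

theorem removeVerts_union (G K : FinHypergraph α) (S : Finset α) :
    (G ∪ K).removeVerts S = G.removeVerts S ∪ K.removeVerts S :=
  ext (Finset.union_sdiff_distrib _ _ _) (Finset.filter_union _ _ _)

theorem WellFormed.union {G K : FinHypergraph α} (hG : G.WellFormed) (hK : K.WellFormed) :
    (G ∪ K).WellFormed := by
  intro e he
  rcases Finset.mem_union.mp he with he | he
  · exact (hG e he).trans Finset.subset_union_left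
  · exact (hK e he).trans Finset.subset_union_right

theorem Uniform.union {G K : FinHypergraph α} {r : ℕ} (hG : G.Uniform r) (hK : K.Uniform r) :
    (G ∪ K).Uniform r := by
  intro e he
  rcases Finset.mem_union.mp he with he | he
  exacts [hG e he, hK e he]

theorem WellFormed.removeVerts {G : FinHypergraph α} (hG : G.WellFormed) (S : Finset α) :
    (G.removeVerts S).WellFormed := by
  intro e he
  rw [removeVerts_edges, Finset.mem_filter] at he
  exact Finset.subset_sdiff.mpr ⟨hG e he.1, he.2⟩

theorem Uniform.removeVerts {G : FinHypergraph α} {r : ℕ} (hG : G.Uniform r) (S : Finset α) :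
    (G.removeVerts S).Uniform r :=
  fun e he => hG e (Finset.mem_filter.mp he).1

theorem removeVerts_congr {G : FinHypergraph α} (hG : G.WellFormed) {S S' : Finset α}
    (h : G.verts ∩ S = G.verts ∩ S') : G.removeVerts S = G.removeVerts S' := by
  have hmem : ∀ a ∈ G.verts, a ∈ S ↔ a ∈ S' := fun a ha => by
    simpa [ha] using Finset.ext_iff.mp h a
  refine ext (Finset.ext fun a => ?_) (Finset.filter_congr fun e he => ?_)
  · simp only [removeVerts_verts, Finset.mem_sdiff]
    exact and_congr_right fun ha => not_congr (hmem a ha)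
  · simp only [Finset.disjoint_left]
    exact forall₂_congr fun a ha => not_congr (hmem a (hG e he ha))

theorem removeVerts_eq_removeVerts_singleton {G : FinHypergraph α} (hG : G.WellFormed) {u : α}
    {S : Finset α} (hu : u ∈ S) (h : G.verts ∩ S ⊆ {u}) :
    G.removeVerts S = G.removeVerts {u} := by
  refine removeVerts_congr hG (Finset.ext fun a => ?_)
  simp only [Finset.mem_inter, Finset.mem_singleton]
  constructor
  · rintro ⟨ha, haS⟩
    exact ⟨ha, Finset.mem_singleton.mp (h (Finset.mem_inter.mpr ⟨ha, haS⟩))⟩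
  · rintro ⟨ha, rfl⟩
    exact ⟨ha, hu⟩

end Operations

section Matchings

variable {α : Type*} {G K : FinHypergraph α} {r : ℕ}

def matchings (G : FinHypergraph α) : Finset (Finset (Finset α)) :=
  G.edges.powerset.filter IsMatchingSet

theorem mem_matchings {M : Finset (Finset α)} :
    M ∈ G.matchings ↔ M ⊆ G.edges ∧ IsMatchingSet M := by
  simp [matchings]

theorem isMatchingSet_iff_pairwiseDisjoint {M : Finset (Finset α)} :
    IsMatchingSet M ↔ (M : Set (Finset α)).PairwiseDisjoint id := Iff.rfl

theorem mul_card_le_card_verts_of_mem_matchings (hG : G.WellFormed) (hGu : G.Uniform r)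
    {M : Finset (Finset α)} (hM : M ∈ G.matchings) : r * M.card ≤ G.verts.card := by
  obtain ⟨hsub, hdisj⟩ := mem_matchings.mp hM
  calc r * M.card = (M.biUnion id).card := by
        rw [Finset.card_biUnion (t := id) hdisj,
          Finset.sum_congr rfl fun e he => (hGu e (hsub he) : (id e).card = r),
          Finset.sum_const, smul_eq_mul, mul_comm]
    _ ≤ G.verts.card := Finset.card_le_card (Finset.biUnion_subset.mpr fun e he => hG e (hsub he))

theorem matchPoly_eq_sum_matchings (hr : 0 < r) (hG : G.WellFormed) (hGu : G.Uniform r)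
    (x : ℝ) :
    G.matchPoly r x = ∑ M ∈ G.matchings, (-1) ^ M.card * x ^ (G.verts.card - r * M.card) := by
  have hmaps : ∀ M ∈ G.matchings, M.card ∈ Finset.range (G.verts.card + 1) := fun M hM =>
    Finset.mem_range_succ_iff.mpr
      ((Nat.le_mul_of_pos_left _ hr).trans (mul_card_le_card_verts_of_mem_matchings hG hGu hM))
  rw [matchPoly, ← Finset.sum_fiberwise_of_maps_to hmaps]
  refine Finset.sum_congr rfl fun k _ => ?_
  rw [Finset.sum_congr rfl fun M hM => by rw [(Finset.mem_filter.mp hM).2], Finset.sum_const,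
    nsmul_eq_mul, matchings, Finset.filter_filter, matchCount]
  simp only [and_comm]
  ring

theorem matchPoly_of_edges_eq_empty (h : G.edges = ∅) (r : ℕ) (x : ℝ) :
    G.matchPoly r x = x ^ G.verts.card := by
  have hcount : ∀ k, G.matchCount k = if k = 0 then 1 else 0 := by
    intro k
    rcases k with _ | k <;> simp [matchCount, h, IsMatchingSet, Finset.filter_singleton]
  rw [matchPoly, Finset.sum_eq_single_of_mem 0 (by simp) fun k _ hk => by simp [hcount, hk]]
  simp [hcount]

theorem matchings_removeVerts (S : Finset α) :
    (G.removeVerts S).matchings = G.matchings.filter fun M => ∀ e ∈ M, Disjoint e S := by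
  ext M
  simp only [mem_matchings, Finset.mem_filter, removeVerts_edges, Finset.subset_iff]
  aesop

theorem filter_mem_matchings {f : Finset α} (hf : f ∈ G.edges) :
    G.matchings.filter (f ∈ ·) = (G.removeVerts f).matchings.image (insert f) := by
  ext M
  simp only [Finset.mem_filter, Finset.mem_image, matchings_removeVerts, mem_matchings,
    isMatchingSet_iff_pairwiseDisjoint]
  constructor
  · rintro ⟨⟨hsub, hdisj⟩, hfM⟩
    refine ⟨M.erase f, ⟨⟨(Finset.erase_subset f M).trans hsub, hdisj.subset (by simp)⟩,
      fun e he => ?_⟩, Finset.insert_erase hfM⟩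
    obtain ⟨hef, heM⟩ := Finset.mem_erase.mp he
    exact hdisj heM hfM hef
  · rintro ⟨M', ⟨⟨hsub, hdisj⟩, hM'f⟩, rfl⟩
    refine ⟨⟨Finset.insert_subset hf hsub, ?_⟩, Finset.mem_insert_self f M'⟩
    rw [Finset.coe_insert]
    exact hdisj.insert fun e he _ => (hM'f e he).symm

theorem sum_matchings_containing_edge (hr : 0 < r) (hG : G.WellFormed) (hGu : G.Uniform r)
    {f : Finset α} (hf : f ∈ G.edges) (x : ℝ) :
    ∑ M ∈ G.matchings.filter (f ∈ ·), (-1) ^ M.card * x ^ (G.verts.card - r * M.card)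
      = -(G.removeVerts f).matchPoly r x := by
  have hcard : (G.removeVerts f).verts.card = G.verts.card - r := by
    rw [removeVerts_verts, Finset.card_sdiff_of_subset (hG f hf), hGu f hf]
  have hfresh : ∀ M ∈ (G.removeVerts f).matchings, f ∉ M := by
    intro M hM hfM
    rw [matchings_removeVerts, Finset.mem_filter] at hM
    have hempty : f = ∅ := disjoint_self.mp (hM.2 f hfM)
    have := hGu f hf
    simp [hempty] at this
    omega
  have hinj : Set.InjOn (insert f) ((G.removeVerts f).matchings : Set (Finset (Finset α))) :=
    fun M hM M' hM' h => by
      rw [← Finset.erase_insert (hfresh M hM), h, Finset.erase_insert (hfresh M' hM')]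
  rw [filter_mem_matchings hf, Finset.sum_image hinj,
    matchPoly_eq_sum_matchings hr (hG.removeVerts f) (hGu.removeVerts f),
    ← Finset.sum_neg_distrib]
  refine Finset.sum_congr rfl fun M hM => ?_
  have hle := mul_card_le_card_verts_of_mem_matchings (hG.removeVerts f) (hGu.removeVerts f) hM
  rw [hcard] at hle
  rw [Finset.card_insert_of_notMem (hfresh M hM), hcard,
    show G.verts.card - r * (M.card + 1) = G.verts.card - r - r * M.card by
      rw [mul_add, mul_one]; omega, pow_succ]
  ring

theorem sum_matchings_avoiding_vertex (hr : 0 < r) (hG : G.WellFormed) (hGu : G.Uniform r)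
    {u : α} (hu : u ∈ G.verts) (x : ℝ) :
    ∑ M ∈ G.matchings.filter (fun M => ∀ e ∈ M, Disjoint e {u}),
      (-1) ^ M.card * x ^ (G.verts.card - r * M.card)
      = x * (G.removeVerts {u}).matchPoly r x := by
  have hcard : (G.removeVerts {u}).verts.card = G.verts.card - 1 := by
    rw [removeVerts_verts, Finset.card_sdiff_of_subset (Finset.singleton_subset_iff.mpr hu),
      Finset.card_singleton]
  have hn : 0 < G.verts.card := Finset.card_pos.mpr ⟨u, hu⟩
  rw [← matchings_removeVerts, matchPoly_eq_sum_matchings hr (hG.removeVerts _)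
    (hGu.removeVerts _), Finset.mul_sum]
  refine Finset.sum_congr rfl fun M hM => ?_
  have hle := mul_card_le_card_verts_of_mem_matchings (hG.removeVerts _) (hGu.removeVerts _) hM
  rw [hcard] at hle
  rw [hcard, show G.verts.card - r * M.card = G.verts.card - 1 - r * M.card + 1 by omega,
    pow_succ]
  ring

theorem sum_matchings_covering_vertex (hr : 0 < r) (hG : G.WellFormed) (hGu : G.Uniform r)
    (u : α) (x : ℝ) :
    ∑ M ∈ G.matchings.filter (fun M => ¬ ∀ e ∈ M, Disjoint e {u}),
      (-1) ^ M.card * x ^ (G.verts.card - r * M.card)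
      = -∑ f ∈ G.edges.filter (u ∈ ·), (G.removeVerts f).matchPoly r x := by
  have hcover : G.matchings.filter (fun M => ¬ ∀ e ∈ M, Disjoint e {u})
      = (G.edges.filter (u ∈ ·)).biUnion fun f => G.matchings.filter (f ∈ ·) := by
    ext M
    simp only [Finset.mem_filter, Finset.mem_biUnion, Finset.disjoint_singleton_right,
      not_forall, not_not, mem_matchings]
    constructor
    · rintro ⟨hM, f, hfM, huf⟩
      exact ⟨f, ⟨hM.1 hfM, huf⟩, hM, hfM⟩
    · rintro ⟨f, ⟨-, huf⟩, hM, hfM⟩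
      exact ⟨hM, f, hfM, huf⟩
  -- a matching contains at most one edge through `u`
  have hdisj : ((G.edges.filter (u ∈ ·) : Finset (Finset α)) : Set (Finset α)).PairwiseDisjoint
      fun f => G.matchings.filter (f ∈ ·) := by
    intro f hf f' hf' hne
    rw [Finset.mem_coe, Finset.mem_filter] at hf hf'
    refine Finset.disjoint_left.mpr fun M hM hM' => hne ?_
    simp only [Finset.mem_filter, mem_matchings] at hM hM'
    by_contra hne'
    exact Finset.disjoint_left.mp (hM.1.2 f hM.2 f' hM'.2 hne') hf.2 hf'.2
  rw [hcover, Finset.sum_biUnion hdisj, ← Finset.sum_neg_distrib]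
  exact Finset.sum_congr rfl fun f hf =>
    sum_matchings_containing_edge hr hG hGu (Finset.mem_filter.mp hf).1 x

theorem matchPoly_eq_mul_removeVerts_sub_sum (hr : 0 < r) (hG : G.WellFormed)
    (hGu : G.Uniform r) {u : α} (hu : u ∈ G.verts) (x : ℝ) :
    G.matchPoly r x = x * (G.removeVerts {u}).matchPoly r x
      - ∑ f ∈ G.edges.filter (u ∈ ·), (G.removeVerts f).matchPoly r x := by
  rw [matchPoly_eq_sum_matchings hr hG hGu,
    ← Finset.sum_filter_add_sum_filter_not _ fun M => ∀ e ∈ M, Disjoint e {u},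
    sum_matchings_avoiding_vertex hr hG hGu hu, sum_matchings_covering_vertex hr hG hGu,
    sub_eq_add_neg]

theorem disjoint_edges_of_disjoint_verts (hr : 0 < r) (hG : G.WellFormed) (hK : K.WellFormed)
    (hGu : G.Uniform r) (h : Disjoint G.verts K.verts) : Disjoint G.edges K.edges := by
  refine Finset.disjoint_left.mpr fun e heG heK => ?_
  have hempty : e = ∅ := Finset.disjoint_self_iff_empty e |>.mp (h.mono (hG e heG) (hK e heK))
  have := hGu e heG
  simp [hempty] at this
  omega

theorem matchings_union (hG : G.WellFormed) (hK : K.WellFormed) (h : Disjoint G.verts K.verts) :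
    (G ∪ K).matchings = (G.matchings ×ˢ K.matchings).image fun p => p.1 ∪ p.2 := by
  ext N
  simp only [Finset.mem_image, Finset.mem_product, Prod.exists, mem_matchings, union_edges,
    isMatchingSet_iff_pairwiseDisjoint]
  constructor
  · rintro ⟨hsub, hdisj⟩
    refine ⟨N ∩ G.edges, N ∩ K.edges, ⟨⟨Finset.inter_subset_right, hdisj.subset ?_⟩,
      Finset.inter_subset_right, hdisj.subset ?_⟩, ?_⟩
    · simp
    · simp
    · rw [← Finset.inter_union_distrib_left, Finset.inter_eq_left.mpr hsub]
  · rintro ⟨M, M', ⟨⟨hM, hMdisj⟩, hM', hM'disj⟩, rfl⟩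
    refine ⟨Finset.union_subset_union hM hM', ?_⟩
    rw [Finset.coe_union]
    exact hMdisj.union hM'disj fun e he e' he' _ => h.mono (hG e (hM he)) (hK e' (hM' he'))

theorem matchPoly_union (hr : 0 < r) (hG : G.WellFormed) (hK : K.WellFormed)
    (hGu : G.Uniform r) (hKu : K.Uniform r) (h : Disjoint G.verts K.verts) (x : ℝ) :
    (G ∪ K).matchPoly r x = G.matchPoly r x * K.matchPoly r x := by
  have hE := disjoint_edges_of_disjoint_verts hr hG hK hGu h
  have hleft : ∀ M ⊆ G.edges, ∀ M' ⊆ K.edges, (M ∪ M') ∩ G.edges = M :=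
      fun M hM M' hM' => by
    rw [Finset.union_inter_distrib_right, Finset.inter_eq_left.mpr hM,
      Finset.disjoint_iff_inter_eq_empty.mp (hE.symm.mono_left hM'), Finset.union_empty]
  have hright : ∀ M ⊆ G.edges, ∀ M' ⊆ K.edges, (M ∪ M') ∩ K.edges = M' :=
      fun M hM M' hM' => by
    rw [Finset.union_inter_distrib_right, Finset.inter_eq_left.mpr hM',
      Finset.disjoint_iff_inter_eq_empty.mp (hE.mono_left hM), Finset.empty_union]
  have hinj : Set.InjOn (fun p : Finset (Finset α) × Finset (Finset α) => p.1 ∪ p.2)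
      (G.matchings ×ˢ K.matchings : Finset _) := by
    rintro ⟨M, M'⟩ hp ⟨N, N'⟩ hq (heq : M ∪ M' = N ∪ N')
    simp only [Finset.coe_product, Set.mem_prod, Finset.mem_coe, mem_matchings] at hp hq
    have h1 := hleft M hp.1.1 M' hp.2.1
    have h2 := hright M hp.1.1 M' hp.2.1
    rw [heq, hleft N hq.1.1 N' hq.2.1] at h1
    rw [heq, hright N hq.1.1 N' hq.2.1] at h2
    exact Prod.ext h1.symm h2.symm
  rw [matchPoly_eq_sum_matchings hr (hG.union hK) (hGu.union hKu),
    matchPoly_eq_sum_matchings hr hG hGu, matchPoly_eq_sum_matchings hr hK hKu,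
    matchings_union hG hK h, Finset.sum_image hinj, Finset.sum_mul_sum,
    ← Finset.sum_product']
  refine Finset.sum_congr rfl fun ⟨M, M'⟩ hp => ?_
  simp only [Finset.mem_product] at hp ⊢
  have hle := mul_card_le_card_verts_of_mem_matchings hG hGu hp.1
  have hle' := mul_card_le_card_verts_of_mem_matchings hK hKu hp.2
  have hMM' : Disjoint M M' := hE.mono (mem_matchings.mp hp.1).1 (mem_matchings.mp hp.2).1
  rw [union_verts, Finset.card_union_of_disjoint h, Finset.card_union_of_disjoint hMM',
    show G.verts.card + K.verts.card - r * (M.card + M'.card)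
      = (G.verts.card - r * M.card) + (K.verts.card - r * M'.card) by rw [mul_add]; omega,
    pow_add, pow_add]
  ring

theorem matchPoly_union_of_inter_subset_singleton (hr : 2 ≤ r) (hG : G.WellFormed)
    (hK : K.WellFormed) (hGu : G.Uniform r) (hKu : K.Uniform r) {u : α} (hu : u ∈ K.verts)
    (h : G.verts ∩ K.verts ⊆ {u}) (x : ℝ) :
    (G ∪ K).matchPoly r x
      = (G.removeVerts {u}).matchPoly r x * K.matchPoly r x
        - (∑ f ∈ G.edges.filter (u ∈ ·), (G.removeVerts f).matchPoly r x)
          * (K.removeVerts {u}).matchPoly r x := by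
  have hr0 : 0 < r := by omega
  have hsplit : ∀ S : Finset α, u ∈ S →
      ((G ∪ K).removeVerts S).matchPoly r x
        = (G.removeVerts S).matchPoly r x * (K.removeVerts S).matchPoly r x := by
    intro S huS
    rw [removeVerts_union]
    refine matchPoly_union hr0 (hG.removeVerts S) (hK.removeVerts S) (hGu.removeVerts S)
      (hKu.removeVerts S) (Finset.disjoint_left.mpr fun a haG haK => ?_) x
    rw [removeVerts_verts, Finset.mem_sdiff] at haG haK
    have hau := Finset.mem_singleton.mp (h (Finset.mem_inter.mpr ⟨haG.1, haK.1⟩))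
    exact haG.2 (hau ▸ huS)
  have hE : Disjoint (G.edges.filter (u ∈ ·)) (K.edges.filter (u ∈ ·)) := by
    refine Finset.disjoint_filter_filter (Finset.disjoint_left.mpr fun e heG heK => ?_)
    have hle := Finset.card_le_card ((Finset.subset_inter (hG e heG) (hK e heK)).trans h)
    rw [hGu e heG, Finset.card_singleton] at hle
    omega
  have hGside : ∑ f ∈ G.edges.filter (u ∈ ·), ((G ∪ K).removeVerts f).matchPoly r x
      = (∑ f ∈ G.edges.filter (u ∈ ·), (G.removeVerts f).matchPoly r x)
        * (K.removeVerts {u}).matchPoly r x := by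
    rw [Finset.sum_mul]
    refine Finset.sum_congr rfl fun f hf => ?_
    obtain ⟨hfG, huf⟩ := Finset.mem_filter.mp hf
    rw [hsplit f huf, removeVerts_eq_removeVerts_singleton hK huf fun a ha =>
      h (Finset.mem_inter.mpr
        ⟨hG f hfG (Finset.mem_inter.mp ha).2, (Finset.mem_inter.mp ha).1⟩)]
  have hKside : ∑ g ∈ K.edges.filter (u ∈ ·), ((G ∪ K).removeVerts g).matchPoly r x
      = (G.removeVerts {u}).matchPoly r x
        * ∑ g ∈ K.edges.filter (u ∈ ·), (K.removeVerts g).matchPoly r x := by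
    rw [Finset.mul_sum]
    refine Finset.sum_congr rfl fun g hg => ?_
    obtain ⟨hgK, hug⟩ := Finset.mem_filter.mp hg
    rw [hsplit g hug, removeVerts_eq_removeVerts_singleton hG hug fun a ha =>
      h (Finset.mem_inter.mpr
        ⟨(Finset.mem_inter.mp ha).1, hK g hgK (Finset.mem_inter.mp ha).2⟩)]
  rw [matchPoly_eq_mul_removeVerts_sub_sum hr0 (hG.union hK) (hGu.union hKu)
      (Finset.mem_union_right _ hu), union_edges, Finset.filter_union, Finset.sum_union hE,
    hsplit {u} (Finset.mem_singleton_self u), hGside, hKside,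
    matchPoly_eq_mul_removeVerts_sub_sum hr0 hK hKu hu]
  ring

end Matchings

section Relabel

variable {α β : Type*} [DecidableEq β]

def map (f : α → β) (G : FinHypergraph α) : FinHypergraph β :=
  ⟨G.verts.image f, G.edges.image (Finset.image f)⟩

@[simp] theorem map_verts (f : α → β) (G : FinHypergraph α) :
    (G.map f).verts = G.verts.image f := rfl

@[simp] theorem map_edges (f : α → β) (G : FinHypergraph α) :
    (G.map f).edges = G.edges.image (Finset.image f) := rfl

theorem injOn_image_of_injOn {f : α → β} {V : Finset α} (hf : Set.InjOn f V) :
    Set.InjOn (Finset.image f) {s | s ⊆ V} := fun s hs t ht h =>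
  Finset.coe_injective <| (hf.image_eq_image_iff (Finset.coe_subset.mpr hs)
    (Finset.coe_subset.mpr ht)).mp
      (by simpa only [Finset.coe_image] using congrArg (fun s : Finset β => (s : Set β)) h)

theorem disjoint_image_iff_of_injOn {f : α → β} {V s t : Finset α} (hf : Set.InjOn f V)
    (hs : s ⊆ V) (ht : t ⊆ V) : Disjoint (s.image f) (t.image f) ↔ Disjoint s t := by
  rw [Finset.disjoint_iff_inter_eq_empty, ← Finset.image_inter_of_injOn s t
    (hf.mono (Set.union_subset (Finset.coe_subset.mpr hs) (Finset.coe_subset.mpr ht))),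
    Finset.image_eq_empty, Finset.disjoint_iff_inter_eq_empty]

variable {G : FinHypergraph α} {f : α → β}

theorem WellFormed.map (hG : G.WellFormed) (f : α → β) : (G.map f).WellFormed := by
  intro e' he'
  obtain ⟨e, he, rfl⟩ := Finset.mem_image.mp he'
  exact Finset.image_subset_image (hG e he)

theorem Uniform.map {r : ℕ} (hG : G.WellFormed) (hGu : G.Uniform r) (hf : Set.InjOn f G.verts) :
    (G.map f).Uniform r := by
  intro e' he'
  obtain ⟨e, he, rfl⟩ := Finset.mem_image.mp he'
  rw [Finset.card_image_of_injOn (hf.mono (Finset.coe_subset.mpr (hG e he))), hGu e he]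

theorem isMatchingSet_image_iff (hG : G.WellFormed) (hf : Set.InjOn f G.verts)
    {M : Finset (Finset α)} (hM : M ⊆ G.edges) :
    IsMatchingSet (M.image (Finset.image f)) ↔ IsMatchingSet M := by
  have hinj : ∀ e ∈ M, ∀ e' ∈ M, e.image f = e'.image f ↔ e = e' := fun e he e' he' =>
    ⟨fun h => injOn_image_of_injOn hf (hG e (hM he)) (hG e' (hM he')) h, congrArg _⟩
  simp only [IsMatchingSet, Finset.forall_mem_image]
  exact forall₂_congr fun e he => forall₂_congr fun e' he' => by
    rw [ne_eq, hinj e he e' he', disjoint_image_iff_of_injOn hf (hG e (hM he)) (hG e' (hM he'))]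

theorem matchCount_map (hG : G.WellFormed) (hf : Set.InjOn f G.verts) (k : ℕ) :
    (G.map f).matchCount k = G.matchCount k := by
  have hinj : Set.InjOn (Finset.image (Finset.image f)) {M | M ⊆ G.edges} :=
    injOn_image_of_injOn ((injOn_image_of_injOn hf).mono hG)
  have hcard : ∀ M ⊆ G.edges, (M.image (Finset.image f)).card = M.card := fun M hM =>
    Finset.card_image_of_injOn ((injOn_image_of_injOn hf).mono fun e he => hG e (hM he))
  have hset : (G.map f).edges.powerset.filter (fun N => N.card = k ∧ IsMatchingSet N)
      = (G.edges.powerset.filter fun M => M.card = k ∧ IsMatchingSet M).image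
          (Finset.image (Finset.image f)) := by
    ext N
    simp only [Finset.mem_filter, Finset.mem_powerset, Finset.mem_image, map_edges]
    constructor
    · rintro ⟨hN, hk, hmatch⟩
      obtain ⟨M, hM, rfl⟩ := Finset.subset_image_iff.mp hN
      exact ⟨M, ⟨hM, hcard M hM ▸ hk, (isMatchingSet_image_iff hG hf hM).mp hmatch⟩, rfl⟩
    · rintro ⟨M, ⟨hM, hk, hmatch⟩, rfl⟩
      exact ⟨Finset.image_subset_image hM, (hcard M hM).trans hk,
        (isMatchingSet_image_iff hG hf hM).mpr hmatch⟩
  rw [matchCount, matchCount, hset, Finset.card_image_of_injOn fun M hM M' hM' =>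
    hinj (Finset.mem_powerset.mp (Finset.mem_filter.mp hM).1)
      (Finset.mem_powerset.mp (Finset.mem_filter.mp hM').1)]

theorem matchPoly_map (hG : G.WellFormed) (hf : Set.InjOn f G.verts) (r : ℕ) (x : ℝ) :
    (G.map f).matchPoly r x = G.matchPoly r x := by
  simp only [matchPoly, matchCount_map hG hf, map_verts, Finset.card_image_of_injOn hf]

theorem map_removeVerts (hG : G.WellFormed) (hf : Set.InjOn f G.verts) {S : Finset α}
    (hS : S ⊆ G.verts) : (G.removeVerts S).map f = (G.map f).removeVerts (S.image f) := by
  refine ext ?_ (Finset.ext fun e' => ?_)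
  · simp only [map_verts, removeVerts_verts]
    -- the difference inside `removeVerts` uses the classical `DecidableEq β`, not the binder
    convert Finset.image_sdiff_of_injOn hf hS
  · simp only [map_edges, removeVerts_edges, Finset.mem_image, Finset.mem_filter]
    constructor
    · rintro ⟨e, ⟨he, hdisj⟩, rfl⟩
      exact ⟨⟨e, he, rfl⟩, (disjoint_image_iff_of_injOn hf (hG e he) hS).mpr hdisj⟩
    · rintro ⟨⟨e, he, rfl⟩, hdisj⟩
      exact ⟨e, ⟨he, (disjoint_image_iff_of_injOn hf (hG e he) hS).mp hdisj⟩, rfl⟩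

end Relabel

section LoosePath

variable {α : Type*} {r : ℕ}

/-- The edges `e_a, …, e_{b-1}` of the loose path on `0, 1, 2, …` whose edge `e_j` is
`{j(r-1), …, (j+1)(r-1)}`; `segmentPath r 0 m` is `P_m^r`, and `pathPoly r m x = φ(P_m^r, x)`. -/
def segmentPath (r a b : ℕ) : FinHypergraph ℕ :=
  ⟨Finset.Icc (a * (r - 1)) (b * (r - 1)),
    (Finset.Ico a b).image fun j => Finset.Icc (j * (r - 1)) ((j + 1) * (r - 1))⟩

def pathPoly (r m : ℕ) (x : ℝ) : ℝ := (segmentPath r 0 m).matchPoly r x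

theorem segmentPath_wellFormed (a b : ℕ) : (segmentPath r a b).WellFormed := by
  intro e he
  simp only [segmentPath, Finset.mem_image, Finset.mem_Ico] at he
  obtain ⟨j, ⟨haj, hjb⟩, rfl⟩ := he
  exact Finset.Icc_subset_Icc (Nat.mul_le_mul_right _ haj) (Nat.mul_le_mul_right _ hjb)

theorem segmentPath_uniform (hr : 0 < r) (a b : ℕ) : (segmentPath r a b).Uniform r := by
  intro e he
  simp only [segmentPath, Finset.mem_image] at he
  obtain ⟨j, -, rfl⟩ := he
  rw [Nat.card_Icc, add_one_mul]
  omega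

theorem segmentPath_eq_map_add {a b : ℕ} (hab : a ≤ b) :
    segmentPath r a b = (segmentPath r 0 (b - a)).map (a * (r - 1) + ·) := by
  have hshift : ∀ j, (Finset.Icc (j * (r - 1)) ((j + 1) * (r - 1))).image (a * (r - 1) + ·)
      = Finset.Icc ((a + j) * (r - 1)) ((a + j + 1) * (r - 1)) := fun j => by
    rw [Finset.image_add_left_Icc]
    congr 1 <;> ring
  refine ext ?_ ?_
  · rw [segmentPath, segmentPath, map_verts, Finset.image_add_left_Icc, zero_mul, add_zero,
      ← add_mul, Nat.add_sub_cancel' hab]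
  · simp only [segmentPath, map_edges, Finset.image_image, Function.comp_def, hshift]
    rw [show Finset.Ico a b = (Finset.Ico 0 (b - a)).image (a + ·) by
      rw [Finset.image_add_left_Ico, add_zero, Nat.add_sub_cancel' hab], Finset.image_image]
    rfl

theorem matchPoly_segmentPath {a b : ℕ} (hab : a ≤ b) (x : ℝ) :
    (segmentPath r a b).matchPoly r x = pathPoly r (b - a) x := by
  rw [segmentPath_eq_map_add hab, matchPoly_map (segmentPath_wellFormed _ _)
    (add_right_injective _).injOn, pathPoly]

-- `hcl` and `hch` say that the edges through `c` are exactly `e_l, …, e_{h-1}`.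
theorem segmentPath_removeVerts {l h c d : ℕ} (hl : l * (r - 1) < c) (hh : c < h * (r - 1))
    (hcl : c ≤ (l + 1) * (r - 1)) (hch : (h - 1) * (r - 1) ≤ c) (hhd : h ≤ d) :
    (segmentPath r 0 d).removeVerts {c}
      = segmentPath r 0 l
        ∪ FinHypergraph.mk ((Finset.Ioo (l * (r - 1)) (h * (r - 1))).erase c) ∅
        ∪ segmentPath r h d := by
  have hhd' : h * (r - 1) ≤ d * (r - 1) := Nat.mul_le_mul_right _ hhd
  have hlh : l < h := by
    by_contra! hhl
    have := Nat.mul_le_mul_right (r - 1) hhl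
    omega
  have hedge : ∀ j, j * (r - 1) ≤ c ∧ c ≤ (j + 1) * (r - 1) ↔ l ≤ j ∧ j < h := by
    intro j
    constructor
    · rintro ⟨hjc, hcj⟩
      constructor
      · by_contra! hjl
        have := Nat.mul_le_mul_right (r - 1) (by omega : j + 1 ≤ l)
        omega
      · by_contra! hhj
        have := Nat.mul_le_mul_right (r - 1) hhj
        omega
    · rintro ⟨hlj, hjh⟩
      exact ⟨(Nat.mul_le_mul_right _ (by omega : j ≤ h - 1)).trans hch,
        hcl.trans (Nat.mul_le_mul_right _ (by omega))⟩
  refine ext (Finset.ext fun a => ?_) ?_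
  · simp only [segmentPath, removeVerts_verts, union_verts, Finset.mem_union, Finset.mem_sdiff,
      Finset.mem_Icc, Finset.mem_singleton, Finset.mem_erase, Finset.mem_Ioo, zero_mul]
    omega
  · ext e
    simp only [segmentPath, removeVerts_edges, union_edges, Finset.mem_filter, Finset.mem_union,
      Finset.mem_image, Finset.mem_Ico, Finset.notMem_empty, or_false]
    constructor
    · rintro ⟨⟨j, hj, rfl⟩, hdisj⟩
      rw [Finset.disjoint_singleton_right, Finset.mem_Icc, hedge] at hdisj
      by_cases hjl : j < l
      exacts [Or.inl ⟨j, by omega, rfl⟩, Or.inr ⟨j, by omega, rfl⟩]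
    · rintro (⟨j, hj, rfl⟩ | ⟨j, hj, rfl⟩) <;>
        refine ⟨⟨j, by omega, rfl⟩, ?_⟩ <;>
        rw [Finset.disjoint_singleton_right, Finset.mem_Icc, hedge] <;>
        omega

theorem matchPoly_segmentPath_removeVerts {l h c d : ℕ} (hl : l * (r - 1) < c)
    (hh : c < h * (r - 1)) (hcl : c ≤ (l + 1) * (r - 1)) (hch : (h - 1) * (r - 1) ≤ c)
    (hhd : h ≤ d) (x : ℝ) :
    ((segmentPath r 0 d).removeVerts {c}).matchPoly r x
      = pathPoly r l x * x ^ (h * (r - 1) - l * (r - 1) - 2) * pathPoly r (d - h) x := by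
  have hr : 0 < r := Nat.pos_of_ne_zero fun h0 => by simp [h0] at hh
  have hhd' : h * (r - 1) ≤ d * (r - 1) := Nat.mul_le_mul_right _ hhd
  have hMid : (FinHypergraph.mk ((Finset.Ioo (l * (r - 1)) (h * (r - 1))).erase c) ∅).WellFormed
      ∧ (FinHypergraph.mk ((Finset.Ioo (l * (r - 1)) (h * (r - 1))).erase c) ∅).Uniform r :=
    ⟨fun e he => (Finset.notMem_empty e he).elim, fun e he => (Finset.notMem_empty e he).elim⟩
  rw [segmentPath_removeVerts hl hh hcl hch hhd,
    matchPoly_union hr ((segmentPath_wellFormed _ _).union hMid.1) (segmentPath_wellFormed _ _)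
      ((segmentPath_uniform hr _ _).union hMid.2) (segmentPath_uniform hr _ _)
      (Finset.disjoint_left.mpr fun a ha ha' => by
        simp only [segmentPath, union_verts, Finset.mem_union, Finset.mem_Icc, Finset.mem_erase,
          Finset.mem_Ioo] at ha ha'
        omega),
    matchPoly_union hr (segmentPath_wellFormed _ _) hMid.1 (segmentPath_uniform hr _ _) hMid.2
      (Finset.disjoint_left.mpr fun a ha ha' => by
        simp only [segmentPath, Finset.mem_Icc, Finset.mem_erase, Finset.mem_Ioo] at ha ha'
        omega),
    matchPoly_of_edges_eq_empty (G := FinHypergraph.mk _ ∅) rfl,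
    matchPoly_segmentPath (Nat.zero_le l),
    matchPoly_segmentPath hhd, Nat.sub_zero, Finset.card_erase_of_mem (by simp; omega),
    Nat.card_Ioo, Nat.sub_sub]

theorem matchPoly_segmentPath_removeVerts_core {j c d : ℕ} (hj : j < d)
    (hc1 : j * (r - 1) < c) (hc2 : c < (j + 1) * (r - 1)) (x : ℝ) :
    ((segmentPath r 0 d).removeVerts {c}).matchPoly r x
      = x ^ (r - 3) * pathPoly r j x * pathPoly r (d - (j + 1)) x := by
  rw [matchPoly_segmentPath_removeVerts hc1 hc2 hc2.le (by simpa using hc1.le) hj,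
    show (j + 1) * (r - 1) - j * (r - 1) - 2 = r - 3 by rw [add_one_mul]; omega]
  ring

theorem matchPoly_segmentPath_removeVerts_joint {j d : ℕ} (hr : 2 ≤ r) (hj0 : 0 < j)
    (hj : j < d) (x : ℝ) :
    ((segmentPath r 0 d).removeVerts {j * (r - 1)}).matchPoly r x
      = x ^ (2 * (r - 2)) * pathPoly r (j - 1) x * pathPoly r (d - (j + 1)) x := by
  have hstep : ∀ n, n * (r - 1) < (n + 1) * (r - 1) := fun n =>
    Nat.mul_lt_mul_of_pos_right (Nat.lt_succ_self n) (by omega)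
  have hj1 : j - 1 + 1 = j := Nat.sub_add_cancel hj0
  rw [matchPoly_segmentPath_removeVerts (l := j - 1) (h := j + 1) (hj1 ▸ hstep (j - 1))
    (hstep j) (hj1 ▸ le_rfl) (by simp) hj,
    show (j + 1) * (r - 1) - (j - 1) * (r - 1) - 2 = 2 * (r - 2) by
      rw [← Nat.sub_mul, show j + 1 - (j - 1) = 2 by omega]; omega]
  ring

theorem map_segmentPath (m : ℕ) (w : ℕ → α) :
    (segmentPath r 0 m).map w
      = FinHypergraph.mk ((Finset.Icc 0 (m * (r - 1))).image w) (loosePathEdges r m w) := by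
  refine ext (by simp [segmentPath]) ?_
  simp only [segmentPath, map_edges, loosePathEdges, Finset.image_image, Finset.range_eq_Ico]
  rfl

theorem injOn_segmentPath_verts {m : ℕ} {w : ℕ → α}
    (hw : Set.InjOn w (Set.Iic (m * (r - 1)))) :
    Set.InjOn w (segmentPath r 0 m).verts :=
  hw.mono fun t ht => by simpa [segmentPath] using ht

theorem IsLoosePath.matchPoly_eq {m : ℕ} {P : FinHypergraph α} (hP : IsLoosePath r m P)
    (x : ℝ) : P.matchPoly r x = pathPoly r m x := by
  obtain ⟨w, hw, hv, he⟩ := hP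
  rw [show P = (segmentPath r 0 m).map w by rw [map_segmentPath]; exact ext hv he,
    matchPoly_map (segmentPath_wellFormed _ _) (injOn_segmentPath_verts hw), pathPoly]

theorem IsPathIdentify.matchPoly_eq {d c : ℕ} {H T : FinHypergraph α} {u : α}
    (hT : IsPathIdentify r d c H u T) (hr : 2 ≤ r) (hH : H.WellFormed) (hHu : H.Uniform r)
    (hc : c ≤ d * (r - 1)) (x : ℝ) :
    T.matchPoly r x
      = (H.removeVerts {u}).matchPoly r x * pathPoly r d x
        - (∑ f ∈ H.edges.filter (u ∈ ·), (H.removeVerts f).matchPoly r x)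
          * ((segmentPath r 0 d).removeVerts {c}).matchPoly r x := by
  obtain ⟨w, hw, hwc, hnew, hv, he⟩ := hT
  set P := segmentPath r 0 d
  have hwP : Set.InjOn w P.verts := injOn_segmentPath_verts hw
  have hcP : c ∈ P.verts := by simpa [P, segmentPath] using hc
  have huP : u ∈ (P.map w).verts := hwc ▸ Finset.mem_image_of_mem w hcP
  have hmeet : H.verts ∩ (P.map w).verts ⊆ {u} := by
    intro a ha
    obtain ⟨haH, haP⟩ := Finset.mem_inter.mp ha
    obtain ⟨t, ht, rfl⟩ := Finset.mem_image.mp haP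
    by_cases htc : t = c
    · rw [htc, hwc]
      exact Finset.mem_singleton_self u
    · exact (hnew t (by simpa [P, segmentPath] using ht) htc haH).elim
  have hremove : (P.map w).removeVerts {u} = (P.removeVerts {c}).map w := by
    rw [map_removeVerts (segmentPath_wellFormed _ _) hwP (Finset.singleton_subset_iff.mpr hcP),
      Finset.image_singleton, hwc]
  rw [show T = H ∪ P.map w by rw [map_segmentPath]; exact ext hv he,
    matchPoly_union_of_inter_subset_singleton hr hH ((segmentPath_wellFormed _ _).map w) hHu
      ((segmentPath_uniform (by omega) _ _).map (segmentPath_wellFormed _ _) hwP) huP hmeet,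
    hremove, matchPoly_map (segmentPath_wellFormed _ _) hwP,
    matchPoly_map ((segmentPath_wellFormed _ _).removeVerts _)
      (hwP.mono (Finset.coe_subset.mpr (removeVerts_verts_subset _ _))), pathPoly]

end LoosePath

end FinHypergraph

theorem matchPoly_core_sub_joint_identify_general {α : Type*} (r d : ℕ) (hr : 3 ≤ r) (hd : 3 ≤ d)
    (H : FinHypergraph α) (hH : H.IsSupertree r) (u : α)
    (i : ℕ) (hi2 : 2 ≤ i) (hid : i ≤ d)
    (c : ℕ) (hc1 : ((d + 1) / 2 - 1) * (r - 1) < c) (hc2 : c < ((d + 1) / 2) * (r - 1))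
    (A B P1 P2 Q1 Q2 : FinHypergraph α)
    (hA : IsPathIdentify r d c H u A)
    (hB : IsPathIdentify r d ((i - 1) * (r - 1)) H u B)
    (hP1 : IsLoosePath r (i - 2) P1) (hP2 : IsLoosePath r (d - i) P2)
    (hQ1 : IsLoosePath r (d / 2) Q1) (hQ2 : IsLoosePath r ((d + 1) / 2 - 1) Q2) :
    ∀ x : ℝ, A.matchPoly r x - B.matchPoly r x
      = x ^ (r - 3) *
          (∑ e ∈ H.edges.filter (fun e => u ∈ e), (H.removeVerts e).matchPoly r x) *
          (x ^ (r - 1) * P1.matchPoly r x * P2.matchPoly r x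
            - Q1.matchPoly r x * Q2.matchPoly r x) := by
  intro x
  obtain ⟨hHwf, hHu, -, -⟩ := hH
  have hq : (d + 1) / 2 - 1 + 1 = (d + 1) / 2 := by omega
  have hqd : (d + 1) / 2 ≤ d := by omega
  rw [hA.matchPoly_eq (by omega) hHwf hHu (hc2.le.trans (Nat.mul_le_mul_right _ hqd)),
    hB.matchPoly_eq (by omega) hHwf hHu (Nat.mul_le_mul_right _ (by omega)),
    matchPoly_segmentPath_removeVerts_core (by omega) hc1 (hq ▸ hc2),
    matchPoly_segmentPath_removeVerts_joint (by omega) (by omega) (by omega),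
    hP1.matchPoly_eq, hP2.matchPoly_eq, hQ1.matchPoly_eq, hQ2.matchPoly_eq, hq,
    show d - (d + 1) / 2 = d / 2 by omega, Nat.sub_add_cancel (by omega : 1 ≤ i),
    show i - 1 - 1 = i - 2 by omega, show 2 * (r - 2) = r - 3 + (r - 1) by omega, pow_add]
  ring

/-- For `r ≥ 3`, `d ≥ 3`, an `r`-uniform supertree `H` with a vertex
`u`, and `2 ≤ i ≤ d`,
`φ(P_d^r(e_{⌈d/2⌉},u)H, x) − φ(P_d^r(v_i,u)H, x)
  = x^(r−3)·( Σ_{e ∈ E_u(H)} φ(H−V(e),x) )·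
    ( x^(r−1)·φ(P_{i−2}^r,x)·φ(P_{d−i}^r,x) − φ(P_{⌊d/2⌋}^r,x)·φ(P_{⌈d/2⌉−1}^r,x) )`. -/
theorem matchPoly_core_sub_joint_identify {α : Type*} (r d : ℕ) (hr : 3 ≤ r) (hd : 3 ≤ d)
    (H : FinHypergraph α) (hH : H.IsSupertree r) (u : α) (hu : u ∈ H.verts)
    (i : ℕ) (hi2 : 2 ≤ i) (hid : i ≤ d)
    (c : ℕ) (hc1 : ((d + 1) / 2 - 1) * (r - 1) < c) (hc2 : c < ((d + 1) / 2) * (r - 1))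
    (A B P1 P2 Q1 Q2 : FinHypergraph α)
    (hA : IsPathIdentify r d c H u A)
    (hB : IsPathIdentify r d ((i - 1) * (r - 1)) H u B)
    (hP1 : IsLoosePath r (i - 2) P1) (hP2 : IsLoosePath r (d - i) P2)
    (hQ1 : IsLoosePath r (d / 2) Q1) (hQ2 : IsLoosePath r ((d + 1) / 2 - 1) Q2) :
    ∀ x : ℝ, A.matchPoly r x - B.matchPoly r x
      = x ^ (r - 3) *
          (∑ e ∈ H.edges.filter (fun e => u ∈ e), (H.removeVerts e).matchPoly r x) *
          (x ^ (r - 1) * P1.matchPoly r x * P2.matchPoly r x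
            - Q1.matchPoly r x * Q2.matchPoly r x) :=
  matchPoly_core_sub_joint_identify_general r d hr hd H hH u i hi2 hid c hc1 hc2 A B P1 P2 Q1 Q2 hA
    hB hP1 hP2 hQ1 hQ2
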